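/- (Strict convexity inequality used for uniqueness of KL stationary points) Let p_{G*}, p_{g'}, p_{g''} be Poisson mixtures over ℕ with p_{g'} ≠ p_{g''} on the support of p_{G*}, suppose g', g'' are probability mass functions on a finite grid with ∑_y k(y|ϑ_i) p_{G*}(y)/p_{g}(y) = 1 for all i whenever g ∈ {g',g''} (with convergent sums). Then for every a ∈ (0,1), ∑_i (a g'_i + (1−a) g''_i) ∑_y k(y|ϑ_i) p_{G*}(y)/(a p_{g'}(y) + (1−a) p_{g''}(y)) < 1, contradicting the same stationarity for the mixture; hence at most one strictly positive stationary point exists. -/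

import Mathlib

/-!
Stationarity of `g'` and `g''` says that, for every atom `ϑ_i`, the series
`∑_y k(y|ϑ_i) p_{G*}(y) / p_g(y)` equals `1`. Since `t ↦ 1/t` is strictly convex on `(0, ∞)`,
the same series for the mixture `a g' + (1 - a) g''` is bounded termwise by the corresponding
convex combination of the two stationary series, strictly at a point `y` with `p_{G*}(y) > 0` and
`p_{g'}(y) ≠ p_{g''}(y)`; so it is `< 1` for every atom, and averaging over the weights of the
mixture keeps it `< 1`.
-/

open MeasureTheory
open scoped ENNReal

/-- The Poisson kernel `k(y|θ) = e^{-θ} θ^y / y!`. -/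
noncomputable def poissonK (θ : ℝ) (y : ℕ) : ℝ :=
  Real.exp (-θ) * θ ^ y / (Nat.factorial y)

/-- The Poisson mixture mass function of a measure `G` on `(0,∞)`. -/
noncomputable def pmix (G : Measure ℝ) (y : ℕ) : ℝ :=
  (∫⁻ θ, ENNReal.ofReal (poissonK θ y) ∂G).toReal

/-- The discrete Poisson mixture `p_g(y) = ∑_i k(y|ϑ_i) g_i` for a pmf `g` on a grid. -/
noncomputable def pf {d : ℕ} (ϑ : Fin d → ℝ) (g : Fin d → ℝ) (y : ℕ) : ℝ :=
  ∑ i, poissonK (ϑ i) y * g i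

theorem strictConvexOn_inv : StrictConvexOn ℝ (Set.Ioi 0) fun x : ℝ => x⁻¹ := by
  simpa only [zpow_neg_one] using strictConvexOn_zpow (m := -1) (by norm_num) (by norm_num)

section ConvexCombination

variable {c x y a : ℝ}

theorem div_convexCombination_le (hc : 0 ≤ c) (hx : 0 < x) (hy : 0 < y)
    (ha : 0 ≤ a) (ha1 : a ≤ 1) :
    c / (a * x + (1 - a) * y) ≤ a * (c / x) + (1 - a) * (c / y) := by
  have hinv := strictConvexOn_inv.convexOn.2 (Set.mem_Ioi.2 hx) (Set.mem_Ioi.2 hy) ha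
    (sub_nonneg.2 ha1) (add_sub_cancel a 1)
  simp only [smul_eq_mul] at hinv
  calc c / (a * x + (1 - a) * y) = c * (a * x + (1 - a) * y)⁻¹ := div_eq_mul_inv _ _
    _ ≤ c * (a * x⁻¹ + (1 - a) * y⁻¹) := mul_le_mul_of_nonneg_left hinv hc
    _ = a * (c / x) + (1 - a) * (c / y) := by ring

theorem div_convexCombination_lt (hc : 0 < c) (hx : 0 < x) (hy : 0 < y) (hxy : x ≠ y)
    (ha : 0 < a) (ha1 : a < 1) :
    c / (a * x + (1 - a) * y) < a * (c / x) + (1 - a) * (c / y) := by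
  have hinv := strictConvexOn_inv.2 (Set.mem_Ioi.2 hx) (Set.mem_Ioi.2 hy) hxy ha
    (sub_pos.2 ha1) (add_sub_cancel a 1)
  simp only [smul_eq_mul] at hinv
  calc c / (a * x + (1 - a) * y) = c * (a * x + (1 - a) * y)⁻¹ := div_eq_mul_inv _ _
    _ < c * (a * x⁻¹ + (1 - a) * y⁻¹) := mul_lt_mul_of_pos_left hinv hc
    _ = a * (c / x) + (1 - a) * (c / y) := by ring

end ConvexCombination

theorem tsum_div_convexCombination_lt {β : Type*} {c f g : β → ℝ} {a : ℝ}
    (hc : ∀ y, 0 ≤ c y) (hf : ∀ y, 0 < f y) (hg : ∀ y, 0 < g y)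
    (hcf : Summable fun y => c y / f y) (hcg : Summable fun y => c y / g y)
    (hne : ∃ y, 0 < c y ∧ f y ≠ g y) (ha : 0 < a) (ha1 : a < 1) :
    ∑' y, c y / (a * f y + (1 - a) * g y) <
      a * ∑' y, c y / f y + (1 - a) * ∑' y, c y / g y := by
  obtain ⟨y₀, hcy₀, hfgy₀⟩ := hne
  have hbound : Summable fun y => a * (c y / f y) + (1 - a) * (c y / g y) :=
    (hcf.mul_left a).add (hcg.mul_left (1 - a))
  have hle : ∀ y, c y / (a * f y + (1 - a) * g y) ≤ a * (c y / f y) + (1 - a) * (c y / g y) :=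
    fun y => div_convexCombination_le (hc y) (hf y) (hg y) ha.le ha1.le
  have hmix_nonneg : ∀ y, 0 ≤ c y / (a * f y + (1 - a) * g y) := fun y =>
    div_nonneg (hc y) (by nlinarith [hf y, hg y])
  calc ∑' y, c y / (a * f y + (1 - a) * g y)
      < ∑' y, (a * (c y / f y) + (1 - a) * (c y / g y)) :=
        Summable.tsum_lt_tsum hle
          (div_convexCombination_lt hcy₀ (hf y₀) (hg y₀) hfgy₀ ha ha1)
          (hbound.of_nonneg_of_le hmix_nonneg hle) hbound
    _ = a * ∑' y, c y / f y + (1 - a) * ∑' y, c y / g y := by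
        rw [(hcf.mul_left a).tsum_add (hcg.mul_left (1 - a)), tsum_mul_left, tsum_mul_left]

theorem Finset.sum_mul_lt_one_of_sum_eq_one {ι : Type*} {s : Finset ι} {w S : ι → ℝ}
    (hw : ∀ i ∈ s, 0 ≤ w i) (hw1 : ∑ i ∈ s, w i = 1) (hS : ∀ i ∈ s, S i < 1) :
    ∑ i ∈ s, w i * S i < 1 := by
  obtain ⟨i₀, hi₀, hwi₀⟩ : ∃ i ∈ s, 0 < w i :=
    Finset.exists_lt_of_sum_lt (by simp [hw1] : ∑ i ∈ s, (0 : ℝ) < ∑ i ∈ s, w i)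
  calc ∑ i ∈ s, w i * S i < ∑ i ∈ s, w i * 1 :=
        Finset.sum_lt_sum (fun i hi => mul_le_mul_of_nonneg_left (hS i hi).le (hw i hi))
          ⟨i₀, hi₀, mul_lt_mul_of_pos_left (hS i₀ hi₀) hwi₀⟩
    _ = 1 := by simp [hw1]

theorem poissonK_pos {θ : ℝ} (hθ : 0 < θ) (y : ℕ) : 0 < poissonK θ y := by
  unfold poissonK
  positivity

theorem pmix_nonneg (G : Measure ℝ) (y : ℕ) : 0 ≤ pmix G y := ENNReal.toReal_nonneg

theorem pf_pos {d : ℕ} {ϑ g : Fin d → ℝ} (hϑ : ∀ i, 0 < ϑ i) (hg : ∀ i, 0 ≤ g i)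
    (hg1 : ∑ i, g i = 1) (y : ℕ) : 0 < pf ϑ g y := by
  obtain ⟨i₀, -, hgi₀⟩ : ∃ i ∈ Finset.univ, 0 < g i :=
    Finset.exists_lt_of_sum_lt (by simp [hg1] : ∑ _ : Fin d, (0 : ℝ) < ∑ i, g i)
  exact Finset.sum_pos' (fun i _ => mul_nonneg (poissonK_pos (hϑ i) y).le (hg i))
    ⟨i₀, Finset.mem_univ _, mul_pos (poissonK_pos (hϑ i₀) y) hgi₀⟩

theorem kl_stationary_mixture_lt_one_general (d : ℕ) (ϑ : Fin d → ℝ)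
    (hpos : ∀ i, 0 < ϑ i)
    (G : Measure ℝ)
    (g' g'' : Fin d → ℝ)
    (hg'0 : ∀ i, 0 ≤ g' i) (hg'1 : ∑ i, g' i = 1)
    (hg''0 : ∀ i, 0 ≤ g'' i) (hg''1 : ∑ i, g'' i = 1)
    (hsum' : ∀ i, Summable (fun y : ℕ => poissonK (ϑ i) y * pmix G y / pf ϑ g' y))
    (hsum'' : ∀ i, Summable (fun y : ℕ => poissonK (ϑ i) y * pmix G y / pf ϑ g'' y))
    (hstat' : ∀ i, ∑' y : ℕ, poissonK (ϑ i) y * pmix G y / pf ϑ g' y = 1)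
    (hstat'' : ∀ i, ∑' y : ℕ, poissonK (ϑ i) y * pmix G y / pf ϑ g'' y = 1)
    (hne : ∃ y : ℕ, 0 < pmix G y ∧ pf ϑ g' y ≠ pf ϑ g'' y) :
    ∀ a : ℝ, 0 < a → a < 1 →
      ∑ i, (a * g' i + (1 - a) * g'' i) *
          ∑' y : ℕ, poissonK (ϑ i) y * pmix G y /
            (a * pf ϑ g' y + (1 - a) * pf ϑ g'' y) < 1 := by
  intro a ha ha1
  have hmix_lt_one : ∀ i, ∑' y : ℕ, poissonK (ϑ i) y * pmix G y /
      (a * pf ϑ g' y + (1 - a) * pf ϑ g'' y) < 1 := fun i => by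
    obtain ⟨y₀, hGy₀, hney₀⟩ := hne
    have h := tsum_div_convexCombination_lt
      (fun y => mul_nonneg (poissonK_pos (hpos i) y).le (pmix_nonneg G y))
      (pf_pos hpos hg'0 hg'1) (pf_pos hpos hg''0 hg''1) (hsum' i) (hsum'' i)
      ⟨y₀, mul_pos (poissonK_pos (hpos i) y₀) hGy₀, hney₀⟩ ha ha1
    rwa [hstat' i, hstat'' i, mul_one, mul_one, add_sub_cancel] at h
  refine Finset.sum_mul_lt_one_of_sum_eq_one
    (fun i _ => by nlinarith [hg'0 i, hg''0 i]) ?_ (fun i _ => hmix_lt_one i)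
  rw [Finset.sum_add_distrib, ← Finset.mul_sum, ← Finset.mul_sum, hg'1, hg''1]
  ring

/-- if `g'` and `g''` are pmfs on a finite grid which both satisfy the
stationarity condition `∑_y k(y|ϑ_i) p_{G*}(y)/p_g(y) = 1` for all `i` (with convergent
sums), and `p_{g'} ≠ p_{g''}` on the support of `p_{G*}`, then for every `a ∈ (0,1)` the
corresponding quantity at the mixture is strictly smaller than `1`. -/
theorem kl_stationary_mixture_lt_one (d : ℕ) (ϑ : Fin d → ℝ)
    (hpos : ∀ i, 0 < ϑ i) (hmono : StrictMono ϑ)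
    (G : Measure ℝ) [IsProbabilityMeasure G] (hG : G (Set.Ioi (0 : ℝ))ᶜ = 0)
    (g' g'' : Fin d → ℝ)
    (hg'0 : ∀ i, 0 ≤ g' i) (hg'1 : ∑ i, g' i = 1)
    (hg''0 : ∀ i, 0 ≤ g'' i) (hg''1 : ∑ i, g'' i = 1)
    (hsum' : ∀ i, Summable (fun y : ℕ => poissonK (ϑ i) y * pmix G y / pf ϑ g' y))
    (hsum'' : ∀ i, Summable (fun y : ℕ => poissonK (ϑ i) y * pmix G y / pf ϑ g'' y))
    (hstat' : ∀ i, ∑' y : ℕ, poissonK (ϑ i) y * pmix G y / pf ϑ g' y = 1)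
    (hstat'' : ∀ i, ∑' y : ℕ, poissonK (ϑ i) y * pmix G y / pf ϑ g'' y = 1)
    (hne : ∃ y : ℕ, 0 < pmix G y ∧ pf ϑ g' y ≠ pf ϑ g'' y) :
    ∀ a : ℝ, 0 < a → a < 1 →
      ∑ i, (a * g' i + (1 - a) * g'' i) *
          ∑' y : ℕ, poissonK (ϑ i) y * pmix G y /
            (a * pf ϑ g' y + (1 - a) * pf ϑ g'' y) < 1 :=
  kl_stationary_mixture_lt_one_general d ϑ hpos G g' g'' hg'0 hg'1 hg''0 hg''1 hsum' hsum'' hstat'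
    hstat'' hne
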